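/- Let B be a C*-algebra, E a Hilbert B-module, and F a closed ternary subspace of E. Then F is a closed submodule of E (i.e. f·b ∈ F for all f ∈ F, b ∈ B) if and only if B_F, the closed linear span of {⟨f,f'⟩ : f, f' ∈ F}, is a closed two-sided ideal of B. -/

import Mathlib

open scoped RightActions

/-- The closed linear span of a subset of a topological `ℂ`-module. -/
noncomputable def clSpan {M : Type*} [AddCommMonoid M] [Module ℂ M] [TopologicalSpace M]
    (S : Set M) : Set M :=
  closure (Submodule.span ℂ S : Set M)

/-- A subset is a (complex) linear subspace. -/
def IsLinearSubspace {M : Type*} [AddCommMonoid M] [Module ℂ M] (K : Set M) : Prop :=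
  (0 : M) ∈ K ∧ (∀ x ∈ K, ∀ y ∈ K, x + y ∈ K) ∧ ∀ (c : ℂ), ∀ x ∈ K, c • x ∈ K

/-- A closed two-sided ideal of a C*-algebra `B`. -/
structure IsClosedTwoSidedIdeal {B : Type*} [NonUnitalCStarAlgebra B] (I : Set B) : Prop where
  isClosed : IsClosed I
  subspace : IsLinearSubspace I
  mul_mem_left : ∀ (b : B), ∀ a ∈ I, b * a ∈ I
  mul_mem_right : ∀ (b : B), ∀ a ∈ I, a * b ∈ I

/-- The Hilbert C⋆-module class as it stood in Mathlib of December 2024 (right action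
`E <• a`, inner product `A`-linear in the second argument on the right). Mathlib's
`CStarModule` now describes left modules instead. -/
class CStarModuleRight (A E : Type*) [NonUnitalSemiring A] [StarRing A] [Module ℂ A]
    [AddCommGroup E] [Module ℂ E] [PartialOrder A] [SMul Aᵐᵒᵖ E] [Norm A] [Norm E]
    extends Inner A E where
  inner_add_right {x} {y} {z} : inner x (y + z) = inner x y + inner x z
  inner_self_nonneg {x} : 0 ≤ inner x x
  inner_self {x} : inner x x = 0 ↔ x = 0
  inner_op_smul_right {a : A} {x y : E} : inner x (y <• a) = inner x y * a
  inner_smul_right_complex {z : ℂ} {x} {y} : inner x (z • y) = z • inner x y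
  star_inner x y : star (inner x y) = inner y x
  norm_eq_sqrt_norm_inner_self x : ‖x‖ = Real.sqrt ‖inner x x‖

section HilbertModule

variable (B : Type*) [NonUnitalCStarAlgebra B] [PartialOrder B] [StarOrderedRing B]
variable {E : Type*} [NormedAddCommGroup E] [NormedSpace ℂ E] [SMul Bᵐᵒᵖ E] [CStarModuleRight B E]

/-- `K ⊆ E` is an *ideal submodule* if it is the closed linear span of
`{x <• i : x ∈ E, i ∈ I}` for some closed two-sided ideal `I` of `B`. -/
def IsIdealSubmodule (K : Set E) : Prop :=
  ∃ I : Set B, IsClosedTwoSidedIdeal I ∧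
    K = clSpan {z : E | ∃ x : E, ∃ i ∈ I, z = x <• i}

/-- A *ternary ideal* of a Hilbert `B`-module `E`: a linear subspace `K` with
`x <• ⟪k, y⟫ ∈ K` for all `x y ∈ E` and `k ∈ K`. -/
def IsTernaryIdeal (K : Set E) : Prop :=
  IsLinearSubspace K ∧ ∀ (x y : E), ∀ k ∈ K, x <• (inner B k y : B) ∈ K

/-- `B_S`: the closed linear span in `B` of all inner products of elements of `S`. -/
noncomputable def rangeIdeal (S : Set E) : Set B :=
  clSpan {b : B | ∃ k ∈ S, ∃ k' ∈ S, b = (inner B k k' : B)}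

/-- The orthogonal complement of a subset of a Hilbert `B`-module. -/
def perp (S : Set E) : Set E :=
  {x : E | ∀ s ∈ S, (inner B x s : B) = 0}

end HilbertModule


/-! If `F <• B ⊆ F`, the identities `b * ⟪k, k'⟫ = ⟪k <• star b, k'⟫` and
`⟪k, k'⟫ * b = ⟪k, k' <• b⟫` show that `B_F` is an ideal. Conversely, the ternary property and
closedness give `F <• B_F ⊆ F`. For `f ∈ F` put `a = ⟪f, f⟫ ∈ B_F` and
`e_n = 1 - (1 - a / M) ^ n` with `M > ‖a‖`. It is a polynomial in `a` without constant term, so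
`e_n * b ∈ B_F` once `B_F` is an ideal. As `‖f <• c‖² = ‖c⋆ a c‖`, the functional calculus gives
`‖f <• b - f <• (e_n * b)‖² ≤ ‖b‖² ‖a (1 - a / M) ^ (2n)‖ ≤ ‖b‖² M / (2n)`, hence
`f <• b ∈ closure F = F`. -/

open Filter Topology

section LinearSubspace

variable {M N : Type*} [AddCommGroup M] [Module ℂ M] [AddCommGroup N] [Module ℂ N]

def IsLinearSubspace.toSubmodule {K : Set M} (hK : IsLinearSubspace K) : Submodule ℂ M where
  carrier := K
  zero_mem' := hK.1
  add_mem' {x y} hx hy := hK.2.1 x hx y hy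
  smul_mem' := hK.2.2

lemma Submodule.isLinearSubspace (p : Submodule ℂ M) : IsLinearSubspace (p : Set M) :=
  ⟨p.zero_mem, fun _ hx _ hy => p.add_mem hx hy, fun c _ hx => p.smul_mem c hx⟩

variable [TopologicalSpace M] [TopologicalSpace N]

lemma isClosed_clSpan (S : Set M) : IsClosed (clSpan S) := isClosed_closure

lemma subset_clSpan (S : Set M) : S ⊆ clSpan S :=
  Submodule.subset_span.trans subset_closure

lemma clSpan_subset {S K : Set M} (hK : IsLinearSubspace K) (hKc : IsClosed K) (hS : S ⊆ K) :
    clSpan S ⊆ K :=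
  closure_minimal (Submodule.span_le (p := hK.toSubmodule).mpr hS :) hKc

lemma mapsTo_clSpan (T : M →L[ℂ] N) {S : Set M} {K : Set N} (hK : IsLinearSubspace K)
    (hKc : IsClosed K) (hS : Set.MapsTo T S K) : Set.MapsTo T (clSpan S) K :=
  clSpan_subset (hK.toSubmodule.comap (T : M →ₗ[ℂ] N)).isLinearSubspace
    (hKc.preimage T.continuous) hS

variable [ContinuousAdd M] [ContinuousConstSMul ℂ M]

lemma isLinearSubspace_clSpan (S : Set M) : IsLinearSubspace (clSpan S) :=
  (Submodule.span ℂ S).topologicalClosure.isLinearSubspace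

end LinearSubspace

namespace CStarModuleRight

variable {B : Type*} [NonUnitalCStarAlgebra B] [PartialOrder B]
variable {E : Type*} [NormedAddCommGroup E] [NormedSpace ℂ E] [SMul Bᵐᵒᵖ E] [CStarModuleRight B E]

lemma inner_sub_right (x y z : E) : (inner B x (y - z) : B) = inner B x y - inner B x z :=
  eq_sub_of_add_eq (by rw [← inner_add_right, sub_add_cancel])

lemma inner_op_smul_left (a : B) (x y : E) : (inner B (x <• a) y : B) = star a * inner B x y := by
  rw [← star_inner y, inner_op_smul_right, star_mul, star_inner]

lemma norm_sq_eq_norm_inner_self (x : E) : ‖x‖ ^ 2 = ‖(inner B x x : B)‖ := by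
  rw [norm_eq_sqrt_norm_inner_self (A := B) x, Real.sq_sqrt (norm_nonneg _)]

lemma ext_inner_left {u v : E} (h : ∀ z : E, (inner B z u : B) = inner B z v) : u = v := by
  have : (inner B (u - v) (u - v) : B) = 0 := by rw [inner_sub_right, h, sub_self]
  exact sub_eq_zero.mp (inner_self.mp this)

lemma op_smul_add (x : E) (a b : B) : x <• (a + b) = x <• a + x <• b :=
  ext_inner_left (B := B) fun z => by
    simp only [inner_add_right (A := B), inner_op_smul_right, mul_add]

lemma op_smul_smul_complex (x : E) (c : ℂ) (a : B) : x <• (c • a) = c • (x <• a) :=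
  ext_inner_left (B := B) fun z => by
    rw [inner_op_smul_right, inner_smul_right_complex, inner_op_smul_right, mul_smul_comm]

lemma norm_op_smul_le (x : E) (a : B) : ‖x <• a‖ ≤ ‖x‖ * ‖a‖ := by
  refine le_of_pow_le_pow_left₀ two_ne_zero (by positivity) ?_
  calc ‖x <• a‖ ^ 2 = ‖star a * ((inner B x x : B) * a)‖ := by
        rw [norm_sq_eq_norm_inner_self (B := B), inner_op_smul_right, inner_op_smul_left, mul_assoc]
    _ ≤ ‖star a‖ * (‖(inner B x x : B)‖ * ‖a‖) :=
        (norm_mul_le _ _).trans (by gcongr; exact norm_mul_le _ _)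
    _ = (‖x‖ * ‖a‖) ^ 2 := by rw [norm_star, ← norm_sq_eq_norm_inner_self (B := B)]; ring

variable (B) in
noncomputable def opSMulCLM (x : E) : B →L[ℂ] E :=
  LinearMap.mkContinuous
    { toFun := fun a => x <• a
      map_add' := op_smul_add x
      map_smul' := op_smul_smul_complex x } ‖x‖ (fun a => by simpa using norm_op_smul_le x a)

@[simp] lemma opSMulCLM_apply (x : E) (a : B) : opSMulCLM B x a = x <• a := rfl

end CStarModuleRight

open CStarModuleRight

lemma mul_one_sub_pow_le_inv {u : ℝ} (hu0 : 0 ≤ u) (hu1 : u ≤ 1) {m : ℕ} (hm : 0 < m) :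
    u * (1 - u) ^ m ≤ 1 / m := by
  have hbernoulli : (1 - u) ^ m * (1 + m * u) ≤ 1 :=
    calc (1 - u) ^ m * (1 + m * u) ≤ (1 - u) ^ m * (1 + u) ^ m := by
          gcongr
          exact one_add_mul_le_pow (by linarith) m
      _ = (1 - u ^ 2) ^ m := by rw [← mul_pow]; ring
      _ ≤ 1 := pow_le_one₀ (by nlinarith) (by nlinarith)
  have hm' : (0 : ℝ) < m := by exact_mod_cast hm
  rw [le_div_iff₀ hm']
  nlinarith [pow_nonneg (sub_nonneg.mpr hu1) m]

section Unital

variable {A : Type*} [CStarAlgebra A] [PartialOrder A] [StarOrderedRing A]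

lemma norm_mul_one_sub_smul_pow_le {a : A} (ha : 0 ≤ a) {M : ℝ} (hM : 0 < M) (haM : ‖a‖ ≤ M)
    {m : ℕ} (hm : 0 < m) : ‖a * (1 - M⁻¹ • a) ^ m‖ ≤ M / m := by
  nontriviality A using Subsingleton.elim _ (0 : A), div_nonneg hM.le
  have hcfc : a * (1 - M⁻¹ • a) ^ m = cfc (fun t : ℝ => t * (1 - M⁻¹ * t) ^ m) a := by
    rw [cfc_mul _ _ a, cfc_id' ℝ a, cfc_pow _ m a, cfc_sub _ _ a, cfc_const_one ℝ a,
      cfc_const_mul_id M⁻¹ a]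
  rw [hcfc]
  refine norm_cfc_le (by positivity) fun t ht => ?_
  have ht0 : 0 ≤ t := spectrum_nonneg_of_nonneg ha ht
  have htM : t ≤ M := (le_abs_self t).trans ((spectrum.norm_le_norm_of_mem ht).trans haM)
  have hu0 : 0 ≤ M⁻¹ * t := by positivity
  have hu1 : M⁻¹ * t ≤ 1 := by rwa [inv_mul_le_iff₀ hM, mul_one]
  calc ‖t * (1 - M⁻¹ * t) ^ m‖ = M * (M⁻¹ * t * (1 - M⁻¹ * t) ^ m) := by
        rw [Real.norm_of_nonneg (mul_nonneg ht0 (pow_nonneg (by linarith) m))]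
        field_simp
    _ ≤ M * (1 / m) := by gcongr; exact mul_one_sub_pow_le_inv hu0 hu1 hm
    _ = M / m := by ring

end Unital

section ApproxUnit

variable {B : Type*} [NonUnitalCStarAlgebra B]

/-- `approxUnit a r n = 1 - (1 - r • a) ^ n`, expanded so that it makes sense without a unit. -/
noncomputable def approxUnit (a : B) (r : ℝ) : ℕ → B
  | 0 => 0
  | n + 1 => approxUnit a r n + r • (a - a * approxUnit a r n)

lemma inr_approxUnit (a : B) (r : ℝ) (n : ℕ) :
    ((approxUnit a r n : B) : Unitization ℂ B) = 1 - (1 - r • (a : Unitization ℂ B)) ^ n := by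
  induction n with
  | zero => simp [approxUnit]
  | succ n ih =>
    push_cast [approxUnit, ih, pow_succ']
    noncomm_ring

lemma approxUnit_mem {I : Set B} (hI : IsLinearSubspace I) (hmul : ∀ b, ∀ x ∈ I, x * b ∈ I)
    {a : B} (ha : a ∈ I) (r : ℝ) (n : ℕ) : approxUnit a r n ∈ I := by
  induction n with
  | zero => exact hI.1
  | succ n ih =>
    refine hI.2.1 _ ih _ ?_
    rw [← Complex.coe_smul, sub_eq_add_neg, ← neg_one_smul ℂ (a * _)]
    exact hI.2.2 _ _ (hI.2.1 _ ha _ (hI.2.2 _ _ (hmul _ _ ha)))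

end ApproxUnit

section HilbertModule

variable {B : Type*} [NonUnitalCStarAlgebra B] [PartialOrder B]
variable {E : Type*} [NormedAddCommGroup E] [NormedSpace ℂ E] [SMul Bᵐᵒᵖ E] [CStarModuleRight B E]

lemma isClosedTwoSidedIdeal_rangeIdeal {F : Set E} (hF : ∀ f ∈ F, ∀ b : B, f <• b ∈ F) :
    IsClosedTwoSidedIdeal (rangeIdeal B F) := by
  refine ⟨isClosed_clSpan _, isLinearSubspace_clSpan _, fun b => ?_, fun b => ?_⟩
  · refine mapsTo_clSpan (ContinuousLinearMap.mul ℂ B b) (isLinearSubspace_clSpan _)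
      (isClosed_clSpan _) ?_
    rintro _ ⟨k, hk, k', hk', rfl⟩
    refine subset_clSpan _ ⟨k <• star b, hF k hk _, k', hk', ?_⟩
    rw [inner_op_smul_left, star_star, ContinuousLinearMap.mul_apply']
  · refine mapsTo_clSpan ((ContinuousLinearMap.mul ℂ B).flip b) (isLinearSubspace_clSpan _)
      (isClosed_clSpan _) ?_
    rintro _ ⟨k, hk, k', hk', rfl⟩
    exact subset_clSpan _ ⟨k, hk, k' <• b, hF k' hk' b, inner_op_smul_right.symm⟩

variable [StarOrderedRing B]

lemma norm_op_smul_sub_op_smul_approxUnit_mul_sq_le (x : E) (b : B) {M : ℝ} (hM : 0 < M)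
    (hxM : ‖(inner B x x : B)‖ ≤ M) {n : ℕ} (hn : 0 < n) :
    ‖x <• b - x <• (approxUnit (inner B x x) M⁻¹ n * b)‖ ^ 2 ≤ ‖b‖ ^ 2 * M / n := by
  set a : B := inner B x x
  set s : Unitization ℂ B := 1 - M⁻¹ • (a : Unitization ℂ B)
  set c : B := b - approxUnit a M⁻¹ n * b
  have ha : 0 ≤ (a : Unitization ℂ B) := Unitization.inr_nonneg_iff.mpr inner_self_nonneg
  have hc : (c : Unitization ℂ B) = s ^ n * b := by
    rw [Unitization.inr_sub, Unitization.inr_mul, inr_approxUnit, sub_mul, one_mul, sub_sub_cancel]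
  have hs : IsSelfAdjoint s := .sub (.one _) ((IsSelfAdjoint.all M⁻¹).smul ha.isSelfAdjoint)
  have has : Commute (a : Unitization ℂ B) (s ^ n) :=
    ((Commute.one_right _).sub_right ((Commute.refl _).smul_right M⁻¹)).pow_right n
  have hinner : ((inner B (x <• c) (x <• c) : B) : Unitization ℂ B)
      = star (b : Unitization ℂ B) * ((a * s ^ (2 * n)) * b) := by
    rw [inner_op_smul_right, inner_op_smul_left, Unitization.inr_mul, Unitization.inr_mul,
      Unitization.inr_star, hc, star_mul, star_pow, hs.star_eq, two_mul, pow_add]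
    change star (b : Unitization ℂ B) * s ^ n * a * (s ^ n * b) = _
    rw [mul_assoc _ (s ^ n), ← has.eq]
    simp only [mul_assoc]
  calc ‖x <• b - x <• (approxUnit a M⁻¹ n * b)‖ ^ 2 = ‖x <• c‖ ^ 2 := by
        rw [← opSMulCLM_apply (B := B), ← opSMulCLM_apply (B := B), ← map_sub]; rfl
    _ = ‖star (b : Unitization ℂ B) * ((a * s ^ (2 * n)) * b)‖ := by
        rw [norm_sq_eq_norm_inner_self (B := B), ← Unitization.norm_inr (𝕜 := ℂ), hinner]
    _ ≤ ‖b‖ * ((M / (2 * n : ℕ)) * ‖b‖) := by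
        refine (norm_mul_le _ _).trans ?_
        rw [norm_star, Unitization.norm_inr]
        gcongr
        refine (norm_mul_le _ _).trans ?_
        rw [Unitization.norm_inr]
        gcongr
        exact norm_mul_one_sub_smul_pow_le ha hM (by rwa [Unitization.norm_inr]) (by omega)
    _ ≤ ‖b‖ ^ 2 * M / n := by
        have hn' : (0 : ℝ) < n := by exact_mod_cast hn
        rw [Nat.cast_mul, Nat.cast_two,
          show ‖b‖ * (M / (2 * n) * ‖b‖) = ‖b‖ ^ 2 * M / (2 * n) by ring]
        gcongr
        linarith

lemma tendsto_op_smul_approxUnit_mul (x : E) (b : B) :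
    Tendsto (fun n => x <• (approxUnit (inner B x x) (‖(inner B x x : B)‖ + 1)⁻¹ n * b)) atTop
      (𝓝 (x <• b)) := by
  set M := ‖(inner B x x : B)‖ + 1
  have hsq : Tendsto (fun n => ‖x <• b - x <• (approxUnit (inner B x x) M⁻¹ n * b)‖ ^ 2) atTop
      (𝓝 0) :=
    squeeze_zero' (.of_forall fun _ => by positivity)
      ((eventually_gt_atTop 0).mono fun n hn =>
        norm_op_smul_sub_op_smul_approxUnit_mul_sq_le x b (by positivity) (by simp [M]) hn)
      (tendsto_const_div_atTop_nhds_zero_nat _)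
  rw [tendsto_iff_norm_sub_tendsto_zero]
  simpa [norm_sub_rev, Real.sqrt_sq (norm_nonneg _)] using hsq.sqrt

lemma op_smul_mem_of_isClosedTwoSidedIdeal_rangeIdeal {F : Set E} (hcl : IsClosed F)
    (hsub : IsLinearSubspace F) (ht : ∀ f ∈ F, ∀ f' ∈ F, ∀ f'' ∈ F, f <• (inner B f' f'' : B) ∈ F)
    (hI : IsClosedTwoSidedIdeal (rangeIdeal B F)) {f : E} (hf : f ∈ F) (b : B) : f <• b ∈ F := by
  have hrange : Set.MapsTo (f <• ·) (rangeIdeal B F) F :=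
    mapsTo_clSpan (opSMulCLM B f) hsub hcl fun _ ⟨k, hk, k', hk', hb⟩ => hb ▸ ht f hf k hk k' hk'
  have hff : (inner B f f : B) ∈ rangeIdeal B F := subset_clSpan _ ⟨f, hf, f, hf, rfl⟩
  exact hcl.mem_of_tendsto (tendsto_op_smul_approxUnit_mul f b) <| .of_forall fun n =>
    hrange <| hI.mul_mem_right b _ <| approxUnit_mem hI.subspace hI.mul_mem_right hff _ n

end HilbertModule

theorem ternary_subspace_isSubmodule_iff_rangeIdeal_isIdeal_general
    {B : Type*} [NonUnitalCStarAlgebra B] [PartialOrder B] [StarOrderedRing B]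
    {E : Type*} [NormedAddCommGroup E] [NormedSpace ℂ E] [SMul Bᵐᵒᵖ E]
    [CStarModuleRight B E] (F : Set E) (hcl : IsClosed F) (hsub : IsLinearSubspace F)
    (ht : ∀ f ∈ F, ∀ f' ∈ F, ∀ f'' ∈ F, f <• (inner B f' f'' : B) ∈ F) :
    (∀ f ∈ F, ∀ b : B, f <• b ∈ F) ↔ IsClosedTwoSidedIdeal (rangeIdeal B F) :=
  ⟨isClosedTwoSidedIdeal_rangeIdeal,
    fun hI _ hf => op_smul_mem_of_isClosedTwoSidedIdeal_rangeIdeal hcl hsub ht hI hf⟩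

/-- a closed ternary subspace `F` of `E` is a (closed) submodule of `E` if and
only if `B_F` is a closed two-sided ideal of `B`. -/
theorem ternary_subspace_isSubmodule_iff_rangeIdeal_isIdeal
    {B : Type*} [NonUnitalCStarAlgebra B] [PartialOrder B] [StarOrderedRing B]
    {E : Type*} [NormedAddCommGroup E] [NormedSpace ℂ E] [SMul Bᵐᵒᵖ E]
    [CStarModuleRight B E] [CompleteSpace E] (F : Set E) (hcl : IsClosed F) (hsub : IsLinearSubspace F)
    (ht : ∀ f ∈ F, ∀ f' ∈ F, ∀ f'' ∈ F, f <• (inner B f' f'' : B) ∈ F) :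
    (∀ f ∈ F, ∀ b : B, f <• b ∈ F) ↔ IsClosedTwoSidedIdeal (rangeIdeal B F) :=
  ternary_subspace_isSubmodule_iff_rangeIdeal_isIdeal_general F hcl hsub ht
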